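/- arXiv:2406.14777 — 3 statements merged into one kernel-verified Lean document; each statement's English description precedes it below -/
import Mathlib

section
/- Let F be a finite set, let h, h* : F → {0,1} be two functions, and let E : F → [0,1] be any function. Assume the set {i ∈ F : h*(i) = 1} is nonempty. Define, for any g : F → {0,1} with {i : g(i)=1} nonempty, the conditional average P(E | g) = (Σ_{i : g(i)=1} E(i)) / |{i : g(i)=1}|. If {i ∈ F : h(i)=1} is nonempty, then |P(E | h) − P(E | h*)| ≤ 2 · |{i ∈ F : h(i) ≠ h*(i)}| / |{i ∈ F : h*(i) = 1}|. -/
/-- Bound on the difference of conditional averages of `E` under two classifiers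
`h` and `h*`, in terms of the number of disagreement points. -/
theorem stmt5 {F : Type*} [Fintype F]
    (h hstar : F → Bool) (E : F → ℝ) (hE : ∀ i, 0 ≤ E i ∧ E i ≤ 1)
    (hstar_ne : (Finset.univ.filter fun i => hstar i = true).Nonempty)
    (h_ne : (Finset.univ.filter fun i => h i = true).Nonempty) :
    |(∑ i ∈ Finset.univ.filter (fun i => h i = true), E i) /
        ((Finset.univ.filter fun i => h i = true).card : ℝ)
      - (∑ i ∈ Finset.univ.filter (fun i => hstar i = true), E i) /
        ((Finset.univ.filter fun i => hstar i = true).card : ℝ)|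
    ≤ 2 * ((Finset.univ.filter fun i => h i ≠ hstar i).card : ℝ) /
        ((Finset.univ.filter fun i => hstar i = true).card : ℝ) := by
  classical
  set A := Finset.univ.filter (fun i => h i = true) with hA
  set B := Finset.univ.filter (fun i => hstar i = true) with hB
  set D := Finset.univ.filter (fun i => h i ≠ hstar i) with hD
  have hunion : (A \ B) ∪ (B \ A) = D := by
    ext i
    simp only [hA, hB, hD, Finset.mem_union, Finset.mem_sdiff, Finset.mem_filter,
      Finset.mem_univ, true_and, ne_eq]
    cases h i <;> cases hstar i <;> simp
  have hdisj : Disjoint (A \ B) (B \ A) := disjoint_sdiff_sdiff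
  have hcardD : (A \ B).card + (B \ A).card = D.card := by
    rw [← hunion, Finset.card_union_of_disjoint hdisj]
  have sum_nonneg' : ∀ s : Finset F, 0 ≤ ∑ i ∈ s, E i := fun s =>
    Finset.sum_nonneg fun i _ => (hE i).1
  have sum_le_card : ∀ s : Finset F, ∑ i ∈ s, E i ≤ (s.card : ℝ) := by
    intro s
    calc ∑ i ∈ s, E i ≤ ∑ _i ∈ s, (1 : ℝ) := Finset.sum_le_sum fun i _ => (hE i).2
    _ = (s.card : ℝ) := by simp
  set sA := ∑ i ∈ A, E i with hsA
  set sB := ∑ i ∈ B, E i with hsB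
  set a := (A.card : ℝ) with ha'
  set b := (B.card : ℝ) with hb'
  set d := (D.card : ℝ) with hd'
  have ha : 0 < a := by rw [ha']; exact_mod_cast Finset.card_pos.mpr h_ne
  have hb : 0 < b := by rw [hb']; exact_mod_cast Finset.card_pos.mpr hstar_ne
  -- sum decomposition
  have hABA : (A ∪ B) \ A = B \ A := by ext i; simp [Finset.mem_sdiff]; tauto
  have hABB : (A ∪ B) \ B = A \ B := by ext i; simp [Finset.mem_sdiff]; tauto
  have hdecA : (∑ i ∈ B \ A, E i) + sA = ∑ i ∈ A ∪ B, E i := by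
    rw [← hABA]; exact Finset.sum_sdiff Finset.subset_union_left
  have hdecB : (∑ i ∈ A \ B, E i) + sB = ∑ i ∈ A ∪ B, E i := by
    rw [← hABB]; exact Finset.sum_sdiff Finset.subset_union_right
  have hsdiff : sA - sB = (∑ i ∈ A \ B, E i) - (∑ i ∈ B \ A, E i) := by
    linarith
  have hd1 : ((A \ B).card : ℝ) + ((B \ A).card : ℝ) = d := by
    rw [hd', ← hcardD]; push_cast; ring
  have habs1 : |sA - sB| ≤ d := by
    rw [hsdiff, abs_le]
    constructor
    · have := sum_le_card (B \ A)
      have := sum_nonneg' (A \ B)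
      linarith
    · have := sum_le_card (A \ B)
      have := sum_nonneg' (B \ A)
      linarith
  -- card decomposition
  have hcA : ((A \ B).card : ℝ) + ((A ∩ B).card : ℝ) = a := by
    rw [ha']; exact_mod_cast congrArg Nat.cast (Finset.card_sdiff_add_card_inter A B)
  have hcB : ((B \ A).card : ℝ) + ((B ∩ A).card : ℝ) = b := by
    rw [hb']; exact_mod_cast congrArg Nat.cast (Finset.card_sdiff_add_card_inter B A)
  have hinter : ((A ∩ B).card : ℝ) = ((B ∩ A).card : ℝ) := by
    rw [Finset.inter_comm]
  have habs2 : |b - a| ≤ d := by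
    rw [abs_le]
    have h1 : (0:ℝ) ≤ ((A \ B).card : ℝ) := by positivity
    have h2 : (0:ℝ) ≤ ((B \ A).card : ℝ) := by positivity
    constructor <;> linarith
  have hsAa : sA ≤ a := by rw [ha']; exact sum_le_card A
  have hsA0 : 0 ≤ sA := sum_nonneg' A
  have key : sA / a - sB / b = (sA - sB) / b + sA * (b - a) / (a * b) := by
    field_simp; ring
  rw [key]
  have h1 : |(sA - sB) / b| ≤ d / b := by
    rw [abs_div, abs_of_pos hb]
    exact div_le_div_of_nonneg_right habs1 hb.le |>.trans_eq rfl
  have h2 : |sA * (b - a) / (a * b)| ≤ d / b := by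
    rw [abs_div, abs_mul, abs_of_nonneg hsA0, abs_of_pos (mul_pos ha hb)]
    have : sA * |b - a| ≤ a * d :=
      mul_le_mul hsAa habs2 (abs_nonneg _) (le_of_lt ha)
    calc sA * |b - a| / (a * b) ≤ a * d / (a * b) :=
          div_le_div_of_nonneg_right this (mul_pos ha hb).le |>.trans_eq rfl
      _ = d / b := by field_simp
  calc |(sA - sB) / b + sA * (b - a) / (a * b)|
      ≤ |(sA - sB) / b| + |sA * (b - a) / (a * b)| := abs_add_le _ _
    _ ≤ d / b + d / b := add_le_add h1 h2
    _ = 2 * d / b := by ring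
end

section
/- Let X_1, ..., X_n be real random variables such that the index set {1,...,n} can be partitioned into k classes, where within each class the variables are pairwise independent (more precisely, the variables in each class are mutually independent). Then Var(Σ_{i=1}^n X_i) ≤ k · Σ_{i=1}^n Var(X_i). -/
/-!
Group the sum by colour classes. Inside a class the variables are independent, so the variance
of the class sum is the sum of the variances. Across the `k` class sums, the pointwise
Cauchy–Schwarz bound `(∑ⱼ aⱼ)² ≤ k ∑ⱼ aⱼ²` applied to the centred class sums and integrated gives
`Var(∑ⱼ Sⱼ) ≤ k ∑ⱼ Var(Sⱼ)`.
-/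

open MeasureTheory ProbabilityTheory Finset

section

variable {Ω : Type*} [MeasurableSpace Ω] {μ : Measure Ω} [IsProbabilityMeasure μ]

theorem variance_sum_le_card_mul_sum_variance {ι : Type*} (s : Finset ι) {X : ι → Ω → ℝ}
    (hX : ∀ i ∈ s, MemLp (X i) 2 μ) :
    Var[fun ω ↦ ∑ i ∈ s, X i ω; μ] ≤ #s * ∑ i ∈ s, Var[X i; μ] := by
  set Z : ι → Ω → ℝ := fun i ω ↦ X i ω - μ[X i]
  have hZ : ∀ i ∈ s, MemLp (Z i) 2 μ := fun i hi ↦ (hX i hi).sub (memLp_const _)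
  have hsum : MemLp (fun ω ↦ ∑ i ∈ s, X i ω) 2 μ := memLp_finsetSum s hX
  have hcentre : ∀ ω, ∑ i ∈ s, X i ω - μ[fun ω ↦ ∑ i ∈ s, X i ω] = ∑ i ∈ s, Z i ω := by
    intro ω
    rw [integral_finsetSum s fun i hi ↦ (hX i hi).integrable one_le_two, ← sum_sub_distrib]
  have hZsq : ∀ i ∈ s, Integrable (fun ω ↦ Z i ω ^ 2) μ := fun i hi ↦ (hZ i hi).integrable_sq
  rw [variance_eq_integral hsum.aemeasurable]
  simp_rw [hcentre]
  calc ∫ ω, (∑ i ∈ s, Z i ω) ^ 2 ∂μ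
      ≤ ∫ ω, #s * ∑ i ∈ s, Z i ω ^ 2 ∂μ :=
        integral_mono (memLp_finsetSum s hZ).integrable_sq
          ((integrable_finsetSum s hZsq).const_mul _) fun ω ↦ sq_sum_le_card_mul_sum_sq
    _ = #s * ∑ i ∈ s, Var[X i; μ] := by
        rw [integral_const_mul, integral_finsetSum s hZsq]
        congr 1
        exact sum_congr rfl fun i hi ↦ (variance_eq_integral (hX i hi).aemeasurable).symm

theorem variance_sum_le_card_mul_sum_variance_of_indepFun_fibers {ι κ : Type*} [Fintype ι]
    [Fintype κ] {X : ι → Ω → ℝ} (hX : ∀ i, MemLp (X i) 2 μ) (c : ι → κ)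
    (hindep : ∀ i j, i ≠ j → c i = c j → X i ⟂ᵢ[μ] X j) :
    Var[fun ω ↦ ∑ i, X i ω; μ] ≤ Fintype.card κ * ∑ i, Var[X i; μ] := by
  classical
  have hfibre : ∀ j, Var[fun ω ↦ ∑ i with c i = j, X i ω; μ] = ∑ i with c i = j, Var[X i; μ] := by
    intro j
    rw [← Finset.sum_fn]
    refine IndepFun.variance_sum (fun i _ ↦ hX i) fun i hi i' hi' hne ↦ ?_
    exact hindep i i' hne (((mem_filter_univ _).1 hi).trans ((mem_filter_univ _).1 hi').symm)
  calc Var[fun ω ↦ ∑ i, X i ω; μ]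
      = Var[fun ω ↦ ∑ j, ∑ i with c i = j, X i ω; μ] := by
        simp_rw [sum_fiberwise univ c]
    _ ≤ Fintype.card κ * ∑ j, Var[fun ω ↦ ∑ i with c i = j, X i ω; μ] :=
        variance_sum_le_card_mul_sum_variance univ fun j _ ↦ memLp_finsetSum _ fun i _ ↦ hX i
    _ = Fintype.card κ * ∑ i, Var[X i; μ] := by
        simp_rw [hfibre, sum_fiberwise univ c]

end

theorem stmt13_general {Ω : Type*} [MeasureSpace Ω]
    [IsProbabilityMeasure (ℙ : Measure Ω)]
    (n k : ℕ) (X : Fin n → Ω → ℝ)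
    (hX : ∀ i, MemLp (X i) 2 ℙ)
    (c : Fin n → Fin k)
    (hind : ∀ j : Fin k,
      iIndepFun
        (fun i : {i : Fin n // c i = j} => X i) ℙ) :
    variance (fun ω => ∑ i, X i ω) ℙ ≤ (k : ℝ) * ∑ i, variance (X i) ℙ := by
  simpa using variance_sum_le_card_mul_sum_variance_of_indepFun_fibers hX c
    fun i i' hne hc ↦ (hind (c i)).indepFun (i := ⟨i, rfl⟩) (j := ⟨i', hc.symm⟩)
      (by simpa [Subtype.ext_iff] using hne)

/-- Chromatic-number variance bound: if the index set can be partitioned into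
`k` classes such that the variables within each class are mutually independent,
then `Var(Σᵢ Xᵢ) ≤ k·Σᵢ Var(Xᵢ)`. -/
theorem stmt13 {Ω : Type*} [MeasureSpace Ω]
    [IsProbabilityMeasure (ℙ : Measure Ω)]
    (n k : ℕ) (X : Fin n → Ω → ℝ)
    (hX : ∀ i, MemLp (X i) 2 ℙ) (hmeas : ∀ i, Measurable (X i))
    (c : Fin n → Fin k)
    (hind : ∀ j : Fin k,
      iIndepFun
        (fun i : {i : Fin n // c i = j} => X i) ℙ) :
    variance (fun ω => ∑ i, X i ω) ℙ ≤ (k : ℝ) * ∑ i, variance (X i) ℙ :=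
  stmt13_general n k X hX c hind
end

section
/- Let r > 0, r ≠ 1, T ≥ 2, and define α_T = 1/(1−r^T) and, for 0 ≤ t ≤ T, u_t = r^{−(t − T·α_T·(1−r^t))/(1−r)} · c^{α_T(1−r^t)} · m^{α_T(1−r^t)} for constants c > 0, m > 0 (so that u_0 is given by the same formula at t = 0). Then for every 1 ≤ t ≤ T, (u_t − u_{t−1}) / u_{t−1}^r ≤ r^{−t} · r^{−r/(1−r)} · r^{T·α_T} · c^{α_T(1−r)} · m^{α_T(1−r)}, and summing over t yields Σ_{t=1}^T (u_t − u_{t−1})/u_{t−1}^r ≤ ζ_T · m^{α_T(1−r)} where ζ_T = (Σ_{t=1}^T r^{−t}) · r^{−r/(1−r)} · r^{T·α_T} · c^{α_T(1−r)}. -/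
/-- Bound on the expected number of failed openings under the asymptotically
optimal schedule: each term `(u_t − u_{t−1})/u_{t−1}^r` is bounded by
`r^{−t}·r^{−r/(1−r)}·r^{T·α_T}·c^{α_T(1−r)}·m^{α_T(1−r)}`, and summing over
`t = 1,…,T` yields the bound `ζ_T·m^{α_T(1−r)}`. -/
theorem stmt18 (r c m : ℝ) (hr : 0 < r) (hr1 : r ≠ 1) (T : ℕ) (hT : 2 ≤ T)
    (hc : 0 < c) (hm : 0 < m) (α : ℝ) (hα : α = 1 / (1 - r ^ T))
    (u : ℕ → ℝ)
    (hu : ∀ t : ℕ, u t =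
      r ^ (-(((t : ℝ) - (T : ℝ) * α * (1 - r ^ t)) / (1 - r))) *
        c ^ (α * (1 - r ^ t)) * m ^ (α * (1 - r ^ t))) :
    (∀ t : ℕ, 1 ≤ t → t ≤ T →
      (u t - u (t - 1)) / (u (t - 1)) ^ r ≤
        r ^ (-(t : ℝ)) * r ^ (-(r / (1 - r))) * r ^ ((T : ℝ) * α) *
          c ^ (α * (1 - r)) * m ^ (α * (1 - r))) ∧
    (∑ t ∈ Finset.Icc 1 T, (u t - u (t - 1)) / (u (t - 1)) ^ r ≤
      ((∑ t ∈ Finset.Icc 1 T, r ^ (-(t : ℝ))) * r ^ (-(r / (1 - r))) *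
          r ^ ((T : ℝ) * α) * c ^ (α * (1 - r))) * m ^ (α * (1 - r))) := by
  have h1r : (1:ℝ) - r ≠ 0 := sub_ne_zero.mpr (Ne.symm hr1)
  have hupos : ∀ t, 0 < u t := by
    intro t; rw [hu t]; positivity
  -- key multiplicative identity
  have key : ∀ t : ℕ, 1 ≤ t → u t =
      (r ^ (-(t : ℝ)) * r ^ (-(r / (1 - r))) * r ^ ((T : ℝ) * α) *
        c ^ (α * (1 - r)) * m ^ (α * (1 - r))) * (u (t - 1)) ^ r := by
    intro t ht
    obtain ⟨s, rfl⟩ := Nat.exists_eq_add_of_le ht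
    have hs : 1 + s - 1 = s := by omega
    rw [hs, hu (1 + s), hu s]
    rw [Real.mul_rpow (by positivity) (by positivity), Real.mul_rpow (by positivity) (by positivity)]
    rw [← Real.rpow_natCast r (1 + s)]
    simp only [Real.rpow_def_of_pos hr, Real.rpow_def_of_pos hc,
      Real.rpow_def_of_pos hm, Real.rpow_def_of_pos (Real.exp_pos _),
      Real.log_exp, ← Real.exp_add]
    congr 1
    have hE : (r:ℝ) ^ s = Real.exp (Real.log r * s) := by
      rw [← Real.rpow_natCast r s, Real.rpow_def_of_pos hr]
    have hpow : Real.exp (Real.log r * (1 + (s:ℝ))) =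
        r * Real.exp (Real.log r * s) := by
      rw [mul_add, mul_one, Real.exp_add, Real.exp_log hr]
    push_cast
    rw [hE, hpow]
    field_simp
    ring
  have bound : ∀ t : ℕ, 1 ≤ t → t ≤ T →
      (u t - u (t - 1)) / (u (t - 1)) ^ r ≤
        r ^ (-(t : ℝ)) * r ^ (-(r / (1 - r))) * r ^ ((T : ℝ) * α) *
          c ^ (α * (1 - r)) * m ^ (α * (1 - r)) := by
    intro t ht hT'
    have hpr : (0:ℝ) < (u (t - 1)) ^ r := Real.rpow_pos_of_pos (hupos _) r
    rw [sub_div, key t ht, mul_div_assoc, div_self (ne_of_gt hpr), mul_one]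
    have : 0 < u (t - 1) / (u (t - 1)) ^ r := div_pos (hupos _) hpr
    linarith
  refine ⟨bound, ?_⟩
  calc ∑ t ∈ Finset.Icc 1 T, (u t - u (t - 1)) / (u (t - 1)) ^ r
      ≤ ∑ t ∈ Finset.Icc 1 T, r ^ (-(t : ℝ)) * r ^ (-(r / (1 - r))) *
          r ^ ((T : ℝ) * α) * c ^ (α * (1 - r)) * m ^ (α * (1 - r)) := by
        apply Finset.sum_le_sum
        intro t ht
        simp only [Finset.mem_Icc] at ht
        exact bound t ht.1 ht.2
    _ = ((∑ t ∈ Finset.Icc 1 T, r ^ (-(t : ℝ))) * r ^ (-(r / (1 - r))) *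
          r ^ ((T : ℝ) * α) * c ^ (α * (1 - r))) * m ^ (α * (1 - r)) := by
        rw [← Finset.sum_mul, ← Finset.sum_mul, ← Finset.sum_mul, ← Finset.sum_mul]
end
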